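/- Let H be a symmetric matrix partitioned into blocks H = [[P, P12],[P21, P22]] with P an invertible d×d block (so P12 = P21^T), let G = [[G11, G12],[0, G22]] be a conformally partitioned block upper-triangular matrix, and let Σ_e = [[Σ11, Σ12],[Σ21, Σ22]] be a conformally partitioned matrix. Suppose H = G H G^T + Σ_e. Define G̃ = G11 + G12 P21 P^{-1} and the Schur complement H/P = P22 − P21 P^{-1} P12. Then the (1,1) block satisfies the Lyapunov equation P = G̃ P G̃^T + Σ11 + G12 (H/P) G12^T. -/

import Mathlib

/-!
The `(1,1)` block of `G H Gᵀ` only sees the first block row `[G11 G12]` of `G`, so the Lyapunov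
equation gives `P = G11 P G11ᵀ + G11 P12 G12ᵀ + G12 P21 G11ᵀ + G12 P22 G12ᵀ + Σ11`.
Completing the square in `G11` with respect to `P` turns the four `G`-terms into
`G̃ P G̃ᵀ + G12 (H/P) G12ᵀ`.
-/

namespace Matrix

variable {α l m n p : Type*} [CommRing α]

theorem toBlocks₁₁_fromBlocks_mul_mul_transpose [Fintype m] [Fintype n]
    (A : Matrix p m α) (B : Matrix p n α) (C : Matrix l m α) (D : Matrix l n α)
    (H₁₁ : Matrix m m α) (H₁₂ : Matrix m n α) (H₂₁ : Matrix n m α) (H₂₂ : Matrix n n α) :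
    (fromBlocks A B C D * fromBlocks H₁₁ H₁₂ H₂₁ H₂₂ * (fromBlocks A B C D)ᵀ).toBlocks₁₁ =
      A * H₁₁ * Aᵀ + A * H₁₂ * Bᵀ + B * H₂₁ * Aᵀ + B * H₂₂ * Bᵀ := by
  simp only [fromBlocks_transpose, fromBlocks_multiply, toBlocks_fromBlocks₁₁,
    Matrix.add_mul, Matrix.mul_assoc]
  abel

theorem mul_mul_transpose_add_schur_complement [Fintype l] [Fintype n] [DecidableEq n]
    {P : Matrix n n α} (hP : Pᵀ = P) (hdet : IsUnit P.det)
    (A : Matrix p n α) (B : Matrix p l α) (C : Matrix l n α) (D : Matrix l l α) :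
    (A + B * C * P⁻¹) * P * (A + B * C * P⁻¹)ᵀ + B * (D - C * P⁻¹ * Cᵀ) * Bᵀ =
      A * P * Aᵀ + A * Cᵀ * Bᵀ + B * C * Aᵀ + B * D * Bᵀ := by
  have hleft : (A + B * C * P⁻¹) * P = A * P + B * C := by
    rw [Matrix.add_mul, Matrix.mul_assoc (B * C), nonsing_inv_mul P hdet, Matrix.mul_one]
  have htrans : (A + B * C * P⁻¹)ᵀ = Aᵀ + P⁻¹ * Cᵀ * Bᵀ := by
    rw [transpose_add, transpose_mul, transpose_mul, transpose_nonsing_inv, hP,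
      Matrix.mul_assoc]
  have hcancel : A * P * (P⁻¹ * Cᵀ * Bᵀ) = A * Cᵀ * Bᵀ := by
    rw [Matrix.mul_assoc A, ← Matrix.mul_assoc P, ← Matrix.mul_assoc P,
      mul_nonsing_inv P hdet, Matrix.one_mul, Matrix.mul_assoc]
  rw [hleft, htrans, Matrix.mul_add, Matrix.add_mul, Matrix.add_mul, hcancel]
  simp only [Matrix.mul_sub, Matrix.sub_mul, Matrix.mul_assoc]
  abel

end Matrix

open Matrix in
/-- Block reduction of a discrete Lyapunov equation: if `H = [[P, P12],[P21, P22]]`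
is symmetric with `P` invertible, `G = [[G11, G12],[0, G22]]` is block
upper-triangular, `Σₑ = [[S11, S12],[S21, S22]]`, and `H = G H Gᵀ + Σₑ`, then
with `G̃ = G11 + G12 P21 P⁻¹` and Schur complement `H/P = P22 − P21 P⁻¹ P12`,
the `(1,1)` block satisfies `P = G̃ P G̃ᵀ + S11 + G12 (H/P) G12ᵀ`. -/
theorem lyapunov_block_schur_reduction {d q : ℕ}
    (P : Matrix (Fin d) (Fin d) ℝ) (P12 : Matrix (Fin d) (Fin q) ℝ)
    (P21 : Matrix (Fin q) (Fin d) ℝ) (P22 : Matrix (Fin q) (Fin q) ℝ)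
    (G11 : Matrix (Fin d) (Fin d) ℝ) (G12 : Matrix (Fin d) (Fin q) ℝ)
    (G22 : Matrix (Fin q) (Fin q) ℝ)
    (S11 : Matrix (Fin d) (Fin d) ℝ) (S12 : Matrix (Fin d) (Fin q) ℝ)
    (S21 : Matrix (Fin q) (Fin d) ℝ) (S22 : Matrix (Fin q) (Fin q) ℝ)
    (hHsymm : (fromBlocks P P12 P21 P22).IsSymm)
    (hPinv : IsUnit P.det)
    (hLyap : fromBlocks P P12 P21 P22 =
      fromBlocks G11 G12 0 G22 * fromBlocks P P12 P21 P22 *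
        (fromBlocks G11 G12 0 G22)ᵀ + fromBlocks S11 S12 S21 S22) :
    P = (G11 + G12 * P21 * P⁻¹) * P * (G11 + G12 * P21 * P⁻¹)ᵀ +
        S11 + G12 * (P22 - P21 * P⁻¹ * P12) * G12ᵀ := by
  have hsymm : fromBlocks Pᵀ P21ᵀ P12ᵀ P22ᵀ = fromBlocks P P12 P21 P22 := by
    rw [← fromBlocks_transpose]; exact hHsymm
  have hP : Pᵀ = P := congrArg toBlocks₁₁ hsymm
  have hP12 : P21ᵀ = P12 := congrArg toBlocks₁₂ hsymm
  have h11 : P = (fromBlocks G11 G12 0 G22 * fromBlocks P P12 P21 P22 *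
      (fromBlocks G11 G12 0 G22)ᵀ).toBlocks₁₁ + S11 :=
    congrArg toBlocks₁₁ hLyap
  rw [toBlocks₁₁_fromBlocks_mul_mul_transpose, ← hP12] at h11
  rw [← hP12, add_right_comm, mul_mul_transpose_add_schur_complement hP hPinv]
  exact h11
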